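/- arXiv:0901.4010 — 2 statements merged into one kernel-verified Lean document; each statement's English description precedes it below -/
import Mathlib

section
/- Let γ be a ray in a complete Riemannian manifold M, and let σ be an asymptotic ray of γ. Then the Busemann function F_γ of γ satisfies F_γ(σ(t)) = t + F_γ(σ(0)) for all t ≥ 0. -/
open Set Filter Metric Real MeasureTheory

/-- A unit-speed ray in a metric space: distance-realizing on `[0, ∞)`. -/
def IsRay {M : Type*} [MetricSpace M] (γ : ℝ → M) : Prop :=
  ∀ s ∈ Set.Ici (0:ℝ), ∀ t ∈ Set.Ici (0:ℝ), dist (γ s) (γ t) = |s - t|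

/-- A unit-speed minimal geodesic segment of length `L`. -/
def IsMinSeg {M : Type*} [MetricSpace M] (c : ℝ → M) (L : ℝ) : Prop :=
  ∀ a ∈ Set.Icc 0 L, ∀ b ∈ Set.Icc 0 L, dist (c a) (c b) = |a - b|

/-- `σ` is an asymptotic ray of `γ`: a pointwise limit of minimal geodesic segments
from points `c n 0` to `γ (t n)` with `t n → ∞`. -/
def IsAsymptoticRay {M : Type*} [MetricSpace M] (γ σ : ℝ → M) : Prop :=
  IsRay σ ∧ ∃ (t : ℕ → ℝ) (c : ℕ → ℝ → M),
    Filter.Tendsto t Filter.atTop Filter.atTop ∧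
    (∀ n, IsMinSeg (c n) (dist (c n 0) (γ (t n)))) ∧
    (∀ n, c n (dist (c n 0) (γ (t n))) = γ (t n)) ∧
    (∀ s ≥ (0:ℝ), Filter.Tendsto (fun n => c n s) Filter.atTop (nhds (σ s)))

/-! Since `x ↦ d(x, γ (t n))` is 1-Lipschitz uniformly in `n`, `F (σ s)` is the limit of
`t n - d(c n s, γ (t n))`. For `s = 0` this limit is finite, so the segment lengths
`d(c n 0, γ (t n))` tend to infinity; once the segment is longer than `s`, the start point
`c n s` is exactly `s` closer to `γ (t n)` than `c n 0`, so the two limits differ by `s`. -/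

open scoped Topology

theorem Filter.Tendsto.sub_dist_of_tendsto {ι M : Type*} [PseudoMetricSpace M]
    {l : Filter ι} {f : ι → ℝ} {p y : ι → M} {x : M} {a : ℝ}
    (h : Tendsto (fun i => f i - dist x (y i)) l (𝓝 a)) (hp : Tendsto p l (𝓝 x)) :
    Tendsto (fun i => f i - dist (p i) (y i)) l (𝓝 a) := by
  refine h.congr_dist (squeeze_zero (fun _ => dist_nonneg) (fun i => ?_)
    (tendsto_iff_dist_tendsto_zero.mp hp))
  rw [Real.dist_eq, sub_sub_sub_cancel_left]
  exact abs_dist_sub_le (p i) x (y i)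

theorem IsMinSeg.dist_right {M : Type*} [MetricSpace M] {c : ℝ → M} {L s : ℝ}
    (hc : IsMinSeg c L) (hs₀ : 0 ≤ s) (hsL : s ≤ L) :
    dist (c s) (c L) = L - s := by
  rw [hc s ⟨hs₀, hsL⟩ L ⟨hs₀.trans hsL, le_rfl⟩, abs_sub_comm, abs_of_nonneg (sub_nonneg.2 hsL)]

theorem busemann_along_asymptotic_ray_general {M : Type*} [MetricSpace M]
    (γ : ℝ → M) (F : M → ℝ)
    (hF : ∀ x : M, Filter.Tendsto (fun t : ℝ => t - dist x (γ t)) Filter.atTop (nhds (F x)))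
    (σ : ℝ → M) (hσ : IsAsymptoticRay γ σ) :
    ∀ t ≥ (0:ℝ), F (σ t) = t + F (σ 0) := by
  obtain ⟨-, T, c, hT, hseg, hend, hconv⟩ := hσ
  intro t ht
  have hlim : ∀ s ≥ (0:ℝ),
      Tendsto (fun n => T n - dist (c n s) (γ (T n))) atTop (𝓝 (F (σ s))) :=
    fun s hs => ((hF (σ s)).comp hT).sub_dist_of_tendsto (hconv s hs)
  have hlen : Tendsto (fun n => dist (c n 0) (γ (T n))) atTop atTop :=
    (hT.atTop_add (hlim 0 le_rfl).neg).congr fun n => by ring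
  have hshift : (fun n => T n - dist (c n 0) (γ (T n)) + t)
      =ᶠ[atTop] fun n => T n - dist (c n t) (γ (T n)) := by
    filter_upwards [hlen.eventually_ge_atTop t] with n hn
    rw [← hend n, (hseg n).dist_right ht hn, hend n]
    ring
  rw [add_comm]
  exact tendsto_nhds_unique (hlim t ht) (((hlim 0 le_rfl).add_const t).congr' hshift)

/-- Along any asymptotic ray `σ` of a ray `γ`, the Busemann function `F_γ` satisfies
`F_γ (σ t) = t + F_γ (σ 0)` for all `t ≥ 0`. -/
theorem busemann_along_asymptotic_ray {M : Type*} [MetricSpace M] [CompleteSpace M]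
    (γ : ℝ → M) (hγ : IsRay γ) (F : M → ℝ)
    (hF : ∀ x : M, Filter.Tendsto (fun t : ℝ => t - dist x (γ t)) Filter.atTop (nhds (F x)))
    (σ : ℝ → M) (hσ : IsAsymptoticRay γ σ) :
    ∀ t ≥ (0:ℝ), F (σ t) = t + F (σ 0) :=
  busemann_along_asymptotic_ray_general γ F hF σ hσ
end

section
/- Define f(t) = e^{−t²} tanh t and G(t) = −f″(t)/f(t) for t > 0. Then G(t) = 8t/sinh(2t) + 2/cosh²(t) − 4t² + 2, and G is strictly monotone decreasing on (0, ∞). -/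
/-!
Write `T = tanh t`, so `T' = 1 - T²`. Applying `(e^{-t²} u)' = e^{-t²} (u' - 2t u)` twice
gives `f'' = e^{-t²} (4t²T - 4t(1 - T²) - 2T(1 - T²) - 2T)`, and the closed form of `G` follows
from `1 - T² = 1 / cosh² t` and `(1 - T²) / T = 2 / sinh 2t`.

Each term of `G` is monotone on `(0, ∞)`: `t / sinh t` decreases because `sinh` is convex on
`[0, ∞)` and vanishes at `0` (so its secant slopes `sinh t / t` from the origin increase),
`1 / cosh² t` decreases, and `-4t²` decreases strictly.
-/

open Set Real

noncomputable def sinclairCurvature (t : ℝ) : ℝ :=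
  8 * t / sinh (2 * t) + 2 / cosh t ^ 2 - 4 * t ^ 2 + 2

theorem Real.hasDerivAt_tanh (x : ℝ) : HasDerivAt tanh (1 - tanh x ^ 2) x := by
  have h := (hasDerivAt_sinh x).div (hasDerivAt_cosh x) (cosh_pos x).ne'
  rw [show sinh / cosh = tanh from funext fun y => (tanh_eq_sinh_div_cosh y).symm] at h
  refine h.congr_deriv ?_
  rw [tanh_eq_sinh_div_cosh]
  field_simp

theorem hasDerivAt_exp_neg_sq_mul {u : ℝ → ℝ} {u' x : ℝ} (hu : HasDerivAt u u' x) :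
    HasDerivAt (fun s => exp (-s ^ 2) * u s) (exp (-x ^ 2) * (u' - 2 * x * u x)) x := by
  refine ((HasDerivAt.exp (hasDerivAt_pow 2 x).neg).mul hu).congr_deriv ?_
  simp only [Pi.neg_apply]
  ring

theorem hasDerivAt_exp_neg_sq_mul_tanh (x : ℝ) :
    HasDerivAt (fun s => exp (-s ^ 2) * tanh s)
      (exp (-x ^ 2) * (1 - tanh x ^ 2 - 2 * x * tanh x)) x :=
  hasDerivAt_exp_neg_sq_mul (hasDerivAt_tanh x)

theorem deriv_exp_neg_sq_mul_tanh :
    deriv (fun s => exp (-s ^ 2) * tanh s) =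
      fun t => exp (-t ^ 2) * (1 - tanh t ^ 2 - 2 * t * tanh t) :=
  funext fun t => (hasDerivAt_exp_neg_sq_mul_tanh t).deriv

theorem deriv_deriv_exp_neg_sq_mul_tanh (t : ℝ) :
    deriv (deriv (fun s => exp (-s ^ 2) * tanh s)) t =
      exp (-t ^ 2) * (4 * t ^ 2 * tanh t - 4 * t * (1 - tanh t ^ 2)
        - 2 * tanh t * (1 - tanh t ^ 2) - 2 * tanh t) := by
  have hu : HasDerivAt (fun s => 1 - tanh s ^ 2 - 2 * s * tanh s)
      (-(2 * tanh t * (1 - tanh t ^ 2)) - (2 * tanh t + 2 * t * (1 - tanh t ^ 2))) t := by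
    refine ((((hasDerivAt_tanh t).pow 2).const_sub 1).sub
      (((hasDerivAt_id' t).const_mul 2).mul (hasDerivAt_tanh t))).congr_deriv ?_
    ring
  rw [deriv_exp_neg_sq_mul_tanh, (hasDerivAt_exp_neg_sq_mul hu).deriv]
  ring

theorem neg_deriv_deriv_div_eq_sinclairCurvature {t : ℝ} (ht : 0 < t) :
    -(deriv (deriv (fun s => exp (-s ^ 2) * tanh s)) t) / (exp (-t ^ 2) * tanh t) =
      sinclairCurvature t := by
  have hs : sinh t ≠ 0 := (sinh_pos_iff.mpr ht).ne'
  have hc : cosh t ≠ 0 := (cosh_pos t).ne'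
  rw [sinclairCurvature, deriv_deriv_exp_neg_sq_mul_tanh, tanh_eq_sinh_div_cosh, sinh_two_mul]
  field_simp
  linear_combination (8 * t * cosh t + 4 * sinh t) * cosh_sq_sub_sinh_sq t

theorem strictConvexOn_sinh : StrictConvexOn ℝ (Ici 0) sinh :=
  StrictMonoOn.strictConvexOn_of_deriv (convex_Ici 0) continuous_sinh.continuousOn <| by
    rw [Real.deriv_sinh, interior_Ici]
    exact fun x hx y _ hxy => cosh_lt_cosh.mpr (by rwa [abs_of_pos hx, abs_of_pos (hx.trans hxy)])

theorem antitoneOn_div_sinh : AntitoneOn (fun t => t / sinh t) (Ioi 0) := by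
  intro x (hx : 0 < x) y (hy : 0 < y) hxy
  have h := strictConvexOn_sinh.convexOn.secant_mono self_mem_Ici hx.le hy.le hx.ne' hy.ne' hxy
  simp only [sinh_zero, sub_zero] at h
  rw [div_le_div_iff₀ hx hy] at h
  rw [div_le_div_iff₀ (sinh_pos_iff.mpr hy) (sinh_pos_iff.mpr hx)]
  linarith

theorem strictAntiOn_sinclairCurvature : StrictAntiOn sinclairCurvature (Ioi 0) := by
  intro x (hx : 0 < x) y (hy : 0 < y) hxy
  have h₁ : 2 * y / sinh (2 * y) ≤ 2 * x / sinh (2 * x) :=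
    antitoneOn_div_sinh (mul_pos two_pos hx) (mul_pos two_pos hy) (by linarith)
  have h₂ : 2 / cosh y ^ 2 ≤ 2 / cosh x ^ 2 := by
    have : cosh x ≤ cosh y := cosh_le_cosh.mpr (by rw [abs_of_pos hx, abs_of_pos hy]; exact hxy.le)
    gcongr
  have h₃ : x ^ 2 < y ^ 2 := by gcongr
  simp only [sinclairCurvature, mul_div_assoc] at h₁ ⊢
  linarith

/-- For `f t = e^{-t²} tanh t`, the radial curvature `G t = -f''(t)/f(t)` equals
`8t/sinh 2t + 2/cosh² t - 4t² + 2`, and `G` is strictly decreasing on `(0,∞)`. -/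
theorem sinclair_curvature_formula_and_strictAnti :
    (∀ t : ℝ, 0 < t →
      -(deriv (deriv (fun s : ℝ => Real.exp (-s^2) * Real.tanh s)) t) /
          (Real.exp (-t^2) * Real.tanh t) =
        8 * t / Real.sinh (2 * t) + 2 / (Real.cosh t)^2 - 4 * t^2 + 2) ∧
    StrictAntiOn (fun t : ℝ =>
      -(deriv (deriv (fun s : ℝ => Real.exp (-s^2) * Real.tanh s)) t) /
        (Real.exp (-t^2) * Real.tanh t)) (Set.Ioi 0) :=
  ⟨fun _ ht => neg_deriv_deriv_div_eq_sinclairCurvature ht,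
    strictAntiOn_sinclairCurvature.congr fun _ ht =>
      (neg_deriv_deriv_div_eq_sinclairCurvature ht).symm⟩
end
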